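/- arXiv:2411.03379 — 5 statements merged into one kernel-verified Lean document; each statement's English description precedes it below -/
import Mathlib

section
/- Let q : ℕ → ℝ be a non-increasing sequence of non-negative numbers with q 0 > 0, and Q n = ∑_{k=0}^{n-1} q k. If the limit of Q(2^k)/Q(2^{k-1}) as k → ∞ exists and the sequence 2^k · q(2^k) / Q(2^k) tends to 0 as k → ∞, then Q(2^k)/Q(2^{k-1}) → 1 as k → ∞. -/
/-! Since `q` is non-increasing, `Q (2n) ≤ Q n + n q n`, so `Q (2^k) / Q (2^(k-1))` is squeezed
between `1` and `1 + 2^(k-1) q (2^(k-1)) / Q (2^(k-1))`, and the latter tends to `1`. -/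

open Filter Finset

section AntitoneSums

variable {q : ℕ → ℝ}

theorem sum_range_two_mul_le_of_antitone (hq : Antitone q) (n : ℕ) :
    ∑ k ∈ range (2 * n), q k ≤ ∑ k ∈ range n, q k + n * q n := by
  rw [two_mul, sum_range_add]
  gcongr
  calc ∑ k ∈ range n, q (n + k) ≤ ∑ _k ∈ range n, q n :=
        sum_le_sum fun k _ => hq (Nat.le_add_right n k)
    _ = n * q n := by rw [sum_const, card_range, nsmul_eq_mul]

theorem sum_range_pos_of_pos_zero (hq0 : ∀ k, 0 ≤ q k) (hq0' : 0 < q 0) {n : ℕ} (hn : 0 < n) :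
    0 < ∑ k ∈ range n, q k :=
  hq0'.trans_le <| single_le_sum (fun k _ => hq0 k) (mem_range.2 hn)

theorem one_le_sum_range_two_mul_div (hq0 : ∀ k, 0 ≤ q k) {n : ℕ}
    (hpos : 0 < ∑ k ∈ range n, q k) :
    1 ≤ (∑ k ∈ range (2 * n), q k) / ∑ k ∈ range n, q k := by
  rw [one_le_div hpos]
  exact sum_le_sum_of_subset_of_nonneg (range_subset_range.2 (by omega)) fun k _ _ => hq0 k

theorem sum_range_two_mul_div_le_of_antitone (hq : Antitone q) {n : ℕ}
    (hpos : 0 < ∑ k ∈ range n, q k) :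
    (∑ k ∈ range (2 * n), q k) / ∑ k ∈ range n, q k ≤
      1 + n * q n / ∑ k ∈ range n, q k := by
  rw [div_le_iff₀ hpos, add_mul, one_mul, div_mul_cancel₀ _ hpos.ne']
  exact sum_range_two_mul_le_of_antitone hq n

end AntitoneSums

theorem stmt_1_general (q : ℕ → ℝ) (hq : Antitone q) (hq0 : ∀ k, 0 ≤ q k) (hq0' : 0 < q 0)
    (Q : ℕ → ℝ) (hQ : ∀ n, Q n = ∑ k ∈ Finset.range n, q k)
    (h0 : Tendsto (fun k => 2 ^ k * q (2 ^ k) / Q (2 ^ k)) atTop (nhds 0)) :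
    Tendsto (fun k => Q (2 ^ k) / Q (2 ^ (k - 1))) atTop (nhds 1) := by
  obtain rfl : Q = fun n => ∑ k ∈ range n, q k := funext hQ
  have hpos (k : ℕ) : 0 < ∑ i ∈ range (2 ^ k), q i :=
    sum_range_pos_of_pos_zero hq0 hq0' (Nat.two_pow_pos k)
  have hdouble {k : ℕ} (hk : 1 ≤ k) : 2 ^ k = 2 * 2 ^ (k - 1) := by
    rw [← pow_succ', Nat.sub_add_cancel hk]
  have hupper : Tendsto (fun k => 1 + 2 ^ (k - 1) * q (2 ^ (k - 1)) /
      ∑ i ∈ range (2 ^ (k - 1)), q i) atTop (nhds 1) := by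
    simpa using tendsto_const_nhds.add (h0.comp (tendsto_sub_atTop_nat 1))
  refine tendsto_of_tendsto_of_tendsto_of_le_of_le' tendsto_const_nhds hupper ?_ ?_
  all_goals filter_upwards [eventually_ge_atTop 1] with k hk
  · rw [hdouble hk]
    exact one_le_sum_range_two_mul_div hq0 (hpos _)
  · rw [hdouble hk]
    exact_mod_cast sum_range_two_mul_div_le_of_antitone hq (hpos _)

theorem stmt_1 (q : ℕ → ℝ) (hq : Antitone q) (hq0 : ∀ k, 0 ≤ q k) (hq0' : 0 < q 0)
    (Q : ℕ → ℝ) (hQ : ∀ n, Q n = ∑ k ∈ Finset.range n, q k)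
    (hlim : ∃ L, Tendsto (fun k => Q (2 ^ k) / Q (2 ^ (k - 1))) atTop (nhds L))
    (h0 : Tendsto (fun k => 2 ^ k * q (2 ^ k) / Q (2 ^ k)) atTop (nhds 0)) :
    Tendsto (fun k => Q (2 ^ k) / Q (2 ^ (k - 1))) atTop (nhds 1) :=
  stmt_1_general q hq hq0 hq0' Q hQ h0
end

section
/- Let q : ℕ → ℝ be a non-increasing sequence of non-negative numbers with q 0 > 0, and Q n = ∑_{k=0}^{n-1} q k. If Q(2^k)/Q(2^{k-1}) → 1 as k → ∞, then 2^k · q(2^k) / Q(2^k) → 0 as k → ∞. -/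
/-!
Since `q` is non-increasing, the dyadic block `Q (2 ^ k) - Q (2 ^ (k - 1))` consists of
`2 ^ (k - 1)` terms, each at least `q (2 ^ k)`; hence `2 ^ k * q (2 ^ k)` is at most twice that
block, and `2 ^ k * q (2 ^ k) / Q (2 ^ k) ≤ 2 * (1 - Q (2 ^ (k - 1)) / Q (2 ^ k)) → 0`.
-/

open Filter Finset

theorem Antitone.sub_nsmul_le_sum_Ico {M : Type*} [AddCommMonoid M] [PartialOrder M]
    [IsOrderedAddMonoid M] {f : ℕ → M} (hf : Antitone f) (m n : ℕ) :
    (n - m) • f n ≤ ∑ k ∈ Ico m n, f k := by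
  simpa using card_nsmul_le_sum (Ico m n) f (f n) fun k hk => hf (mem_Ico.mp hk).2.le

theorem Antitone.two_pow_succ_mul_le_two_mul_sum_sub {R : Type*} [CommRing R] [PartialOrder R]
    [IsOrderedRing R] {f : ℕ → R} (hf : Antitone f) (k : ℕ) :
    2 ^ (k + 1) * f (2 ^ (k + 1)) ≤
      2 * (∑ i ∈ range (2 ^ (k + 1)), f i - ∑ i ∈ range (2 ^ k), f i) := by
  have hblock := hf.sub_nsmul_le_sum_Ico (2 ^ k) (2 ^ (k + 1))
  have hcard : ((2 ^ (k + 1) - 2 ^ k : ℕ) : R) = 2 ^ k := by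
    rw [pow_succ, Nat.mul_two, Nat.add_sub_cancel, Nat.cast_pow, Nat.cast_ofNat]
  rw [sum_Ico_eq_sub _ (Nat.pow_le_pow_right two_pos k.le_succ), nsmul_eq_mul, hcard] at hblock
  calc 2 ^ (k + 1) * f (2 ^ (k + 1)) = 2 * (2 ^ k * f (2 ^ (k + 1))) := by ring
    _ ≤ _ := mul_le_mul_of_nonneg_left hblock zero_le_two

theorem stmt_2_general (q : ℕ → ℝ) (hq : Antitone q) (hq0 : ∀ k, 0 ≤ q k)
    (Q : ℕ → ℝ) (hQ : ∀ n, Q n = ∑ k ∈ Finset.range n, q k)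
    (h1 : Tendsto (fun k => Q (2 ^ k) / Q (2 ^ (k - 1))) atTop (nhds 1)) :
    Tendsto (fun k => 2 ^ k * q (2 ^ k) / Q (2 ^ k)) atTop (nhds 0) := by
  have hQ_nonneg (n : ℕ) : 0 ≤ Q n := hQ n ▸ sum_nonneg fun k _ => hq0 k
  -- the ratio in `h1` is `0` wherever `Q (2 ^ k) = 0`, so it must eventually be nonzero
  have hQ_pos : ∀ᶠ k in atTop, 0 < Q (2 ^ k) :=
    (h1.eventually_ne one_ne_zero).mono fun k hk =>
      (hQ_nonneg _).lt_of_ne' (div_ne_zero_iff.mp hk).1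
  have hbound : Tendsto (fun k => 2 * (1 - Q (2 ^ (k - 1)) / Q (2 ^ k))) atTop (nhds 0) := by
    simpa using ((h1.inv₀ one_ne_zero).const_sub 1).const_mul 2
  refine tendsto_of_tendsto_of_tendsto_of_le_of_le' tendsto_const_nhds hbound
    (Eventually.of_forall fun k => div_nonneg (mul_nonneg (by positivity) (hq0 _)) (hQ_nonneg _)) ?_
  filter_upwards [hQ_pos, eventually_ge_atTop 1] with k hk hk1
  obtain ⟨j, rfl⟩ := Nat.exists_eq_add_of_le' hk1
  have hcancel : 2 * (1 - Q (2 ^ j) / Q (2 ^ (j + 1))) * Q (2 ^ (j + 1)) =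
      2 * (Q (2 ^ (j + 1)) - Q (2 ^ j)) := by
    field_simp
  rw [div_le_iff₀ hk, Nat.add_sub_cancel, hcancel, hQ, hQ]
  exact hq.two_pow_succ_mul_le_two_mul_sum_sub j

theorem stmt_2 (q : ℕ → ℝ) (hq : Antitone q) (hq0 : ∀ k, 0 ≤ q k) (hq0' : 0 < q 0)
    (Q : ℕ → ℝ) (hQ : ∀ n, Q n = ∑ k ∈ Finset.range n, q k)
    (h1 : Tendsto (fun k => Q (2 ^ k) / Q (2 ^ (k - 1))) atTop (nhds 1)) :
    Tendsto (fun k => 2 ^ k * q (2 ^ k) / Q (2 ^ k)) atTop (nhds 0) :=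
  stmt_2_general q hq hq0 Q hQ h1
end

section
/- Let q : ℕ → ℝ be non-increasing and non-negative with q 0 > 0, Q n = ∑_{k<n} q k, and set π_k = (Q(2^k) - Q(2^{k-1}))/Q(2^{k-1}). Suppose π_k → 0. Define δ(l,k) = max{π_s : k−l ≤ s ≤ k} for 0 ≤ l < k, and γ_k as the least l with δ(l+1,k) > 1/(l+1) if such l < k exists, else γ_k = ⌊k/2⌋. Then there exists a constant c > 0 such that Q(2^{k−s}) ≥ c · Q(2^k) for all s with 1 ≤ s ≤ γ_k and all sufficiently large k. -/
open Filter

/-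
Write `Q_j` for `Q (2 ^ j)`, so that `Q_j = (1 + π_j) Q_{j-1}`. If `1 ≤ s ≤ γ_k`, the choice of
`γ_k` gives `π_j ≤ δ(s, k) ≤ 1 / s` for every `j ∈ [k - s, k]`. Hence
`Q_k ≤ (1 + 1/s) ^ s Q_{k-s} ≤ e Q_{k-s}`, and `c = e⁻¹` works for every `k`.
-/

/-- δ(l,k) = max of π over s ∈ [k−l, k]. -/
noncomputable def paperDelta (π : ℕ → ℝ) (l k : ℕ) : ℝ :=
  Finset.sup' (Finset.Icc (k - l) k)
    ⟨k, Finset.mem_Icc.mpr ⟨Nat.sub_le _ _, le_refl k⟩⟩ π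

-- γ_k: the least l < k with δ(l+1,k) > 1/(l+1), if one exists; otherwise ⌊k/2⌋.
open Classical in
noncomputable def paperGamma (π : ℕ → ℝ) (k : ℕ) : ℕ :=
  if h : ∃ l, l < k ∧ 1 / ((l : ℝ) + 1) < paperDelta π (l + 1) k then Nat.find h
  else k / 2

lemma le_paperDelta (π : ℕ → ℝ) {l k j : ℕ} (hlj : k - l ≤ j) (hjk : j ≤ k) :
    π j ≤ paperDelta π l k :=
  Finset.le_sup' π (Finset.mem_Icc.mpr ⟨hlj, hjk⟩)

lemma lt_and_paperDelta_le_of_le_paperGamma {π : ℕ → ℝ} {s k : ℕ} (hs : 0 < s)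
    (hsγ : s ≤ paperGamma π k) : s < k ∧ paperDelta π s k ≤ 1 / s := by
  have hcast : ((s - 1 : ℕ) : ℝ) + 1 = s := by
    rw [Nat.cast_sub hs, Nat.cast_one, sub_add_cancel]
  suffices s < k ∧ paperDelta π (s - 1 + 1) k ≤ 1 / (((s - 1 : ℕ) : ℝ) + 1) by
    rwa [Nat.sub_add_cancel hs, hcast] at this
  unfold paperGamma at hsγ
  split_ifs at hsγ with h
  · have hsk : s < k := by have := (Nat.find_spec h).1; omega
    refine ⟨hsk, ?_⟩
    have hmin := Nat.find_min h (show s - 1 < Nat.find h by omega)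
    push Not at hmin
    exact hmin (by omega)
  · push Not at h
    have hsk : s < k := by omega
    exact ⟨hsk, h (s - 1) (by omega)⟩

lemma one_add_inv_pow_le_exp_one (s : ℕ) : (1 + 1 / (s : ℝ)) ^ s ≤ Real.exp 1 := by
  rcases Nat.eq_zero_or_pos s with rfl | hs
  · simp [Real.one_le_exp zero_le_one]
  calc (1 + 1 / (s : ℝ)) ^ s ≤ Real.exp (1 / s) ^ s := by
        gcongr
        linarith [Real.add_one_le_exp (1 / (s : ℝ))]
    _ = Real.exp 1 := by
        rw [← Real.exp_nat_mul, mul_one_div_cancel (by positivity)]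

theorem stmt_6_general (q : ℕ → ℝ) (hq0 : ∀ k, 0 ≤ q k) (hq0' : 0 < q 0)
    (Q : ℕ → ℝ) (hQ : ∀ n, Q n = ∑ k ∈ Finset.range n, q k)
    (π : ℕ → ℝ) (hπ : ∀ k, π k = (Q (2 ^ k) - Q (2 ^ (k - 1))) / Q (2 ^ (k - 1))) :
    ∃ c : ℝ, 0 < c ∧ ∃ K : ℕ, ∀ k ≥ K, ∀ s : ℕ, 1 ≤ s → s ≤ paperGamma π k →
      c * Q (2 ^ k) ≤ Q (2 ^ (k - s)) := by
  have hQpos (j : ℕ) : 0 < Q (2 ^ j) := by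
    rw [hQ]
    exact Finset.sum_pos' (fun i _ => hq0 i) ⟨0, by simp, hq0'⟩
  have hQsucc (j : ℕ) : Q (2 ^ (j + 1)) = (1 + π (j + 1)) * Q (2 ^ j) := by
    rw [hπ, Nat.add_sub_cancel]
    field_simp [(hQpos j).ne']
    ring
  refine ⟨Real.exp (-1), Real.exp_pos _, 0, fun k _ s hs hsγ => ?_⟩
  obtain ⟨hsk, hδ⟩ := lt_and_paperDelta_le_of_le_paperGamma hs hsγ
  have hgrowth : Q (2 ^ (k - s + s)) ≤ (1 + 1 / (s : ℝ)) ^ s * Q (2 ^ (k - s + 0)) := by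
    refine le_geom (u := fun i => Q (2 ^ (k - s + i))) (by positivity) s fun i hi => ?_
    rw [← add_assoc, hQsucc]
    have hπi : π (k - s + i + 1) ≤ 1 / s :=
      (le_paperDelta π (by omega) (by omega)).trans hδ
    gcongr
    exact (hQpos _).le
  rw [Nat.sub_add_cancel hsk.le, add_zero] at hgrowth
  calc Real.exp (-1) * Q (2 ^ k)
      ≤ Real.exp (-1) * (Real.exp 1 * Q (2 ^ (k - s))) := by
        gcongr
        exact hgrowth.trans (by gcongr; exacts [(hQpos _).le, one_add_inv_pow_le_exp_one s])
    _ = Q (2 ^ (k - s)) := by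
        rw [← mul_assoc, ← Real.exp_add, neg_add_cancel, Real.exp_zero, one_mul]

theorem stmt_6 (q : ℕ → ℝ) (hq : Antitone q) (hq0 : ∀ k, 0 ≤ q k) (hq0' : 0 < q 0)
    (Q : ℕ → ℝ) (hQ : ∀ n, Q n = ∑ k ∈ Finset.range n, q k)
    (π : ℕ → ℝ) (hπ : ∀ k, π k = (Q (2 ^ k) - Q (2 ^ (k - 1))) / Q (2 ^ (k - 1)))
    (hπ0 : Tendsto π atTop (nhds 0)) :
    ∃ c : ℝ, 0 < c ∧ ∃ K : ℕ, ∀ k ≥ K, ∀ s : ℕ, 1 ≤ s → s ≤ paperGamma π k →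
      c * Q (2 ^ k) ≤ Q (2 ^ (k - s)) :=
  stmt_6_general q hq0 hq0' Q hQ π hπ
end

section
/- With the notation of the γ_k construction: if π_k → 0 as k → ∞ and for each k, γ_k denotes the least l ∈ {0,…,k−1} with δ(l+1,k) > 1/(l+1) when such l exists and ⌊k/2⌋ otherwise, then γ_k → ∞ as k → ∞. -/
open Filter

theorem paperDelta_lt_iff {π : ℕ → ℝ} {l k : ℕ} {c : ℝ} :
    paperDelta π l k < c ↔ ∀ s ∈ Finset.Icc (k - l) k, π s < c :=
  Finset.sup'_lt_iff _

theorem le_paperGamma {π : ℕ → ℝ} {N k : ℕ} (hNk : N ≤ k / 2)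
    (hδ : ∀ l < N, paperDelta π (l + 1) k ≤ 1 / ((l : ℝ) + 1)) :
    N ≤ paperGamma π k := by
  unfold paperGamma
  split_ifs with h
  · exact (Nat.le_find_iff h N).2 fun l hl ⟨_, hlt⟩ => (hδ l hl).not_gt hlt
  · exact hNk

theorem paperDelta_lt_of_eventually_lt {π : ℕ → ℝ} {M N k : ℕ}
    (hM : ∀ s, M ≤ s → π s < 1 / ((N : ℝ) + 1)) (hk : M + N ≤ k) {l : ℕ} (hl : l < N) :
    paperDelta π (l + 1) k < 1 / ((l : ℝ) + 1) := by
  refine paperDelta_lt_iff.2 fun s hs => ?_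
  -- the window starts at `k - (l + 1) ≥ k - N ≥ M`
  have hsM : M ≤ s := by
    have := (Finset.mem_Icc.1 hs).1
    omega
  calc π s < 1 / ((N : ℝ) + 1) := hM s hsM
    _ ≤ 1 / ((l : ℝ) + 1) := by gcongr

theorem stmt_7_general (π : ℕ → ℝ) (hπ0 : Tendsto π atTop (nhds 0)) :
    Tendsto (fun k => paperGamma π k) atTop atTop := by
  refine tendsto_atTop.2 fun N => ?_
  obtain ⟨M, hM⟩ := eventually_atTop.1 <|
    hπ0.eventually (gt_mem_nhds (show (0 : ℝ) < 1 / ((N : ℝ) + 1) by positivity))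
  refine eventually_atTop.2 ⟨max (M + N) (2 * N), fun k hk => ?_⟩
  rw [max_le_iff] at hk
  exact le_paperGamma (by omega) fun l hl =>
    (paperDelta_lt_of_eventually_lt hM hk.1 hl).le

theorem stmt_7 (q : ℕ → ℝ) (hq : Antitone q) (hq0 : ∀ k, 0 ≤ q k) (hq0' : 0 < q 0)
    (Q : ℕ → ℝ) (hQ : ∀ n, Q n = ∑ k ∈ Finset.range n, q k)
    (π : ℕ → ℝ) (hπ : ∀ k, π k = (Q (2 ^ k) - Q (2 ^ (k - 1))) / Q (2 ^ (k - 1)))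
    (hπ0 : Tendsto π atTop (nhds 0)) :
    Tendsto (fun k => paperGamma π k) atTop atTop :=
  stmt_7_general π hπ0
end

section
/- With P as in the previous context, using the disjointness of the supports I_N ∔ θ_i one has ‖P‖_{L^∞[0,1)} ≤ C · 2^γ · √γ for an absolute constant C. -/
/-- the j-th binary digit of x ∈ [0,1) (expansion terminating in 0's for dyadic rationals). -/
noncomputable def dyadicDigit (j : ℕ) (x : ℝ) : ℕ :=
  ⌊x * 2 ^ (j + 1)⌋.toNat % 2

/-- the n-th Walsh–Paley function. -/
noncomputable def walsh (n : ℕ) (x : ℝ) : ℝ :=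
  (-1 : ℝ) ^ (∑ j ∈ Finset.range n, if n.testBit j then dyadicDigit j x else 0)

/-- the Walsh–Dirichlet kernel `D_m = ∑_{k<m} w_k`. -/
noncomputable def walshDirichlet (m : ℕ) (x : ℝ) : ℝ :=
  ∑ k ∈ Finset.range m, walsh k x

/-- dyadic (logical) addition `x ∔ y` on [0,1). -/
noncomputable def dyadicAdd (x y : ℝ) : ℝ :=
  ∑' n : ℕ, (if dyadicDigit n x ≠ dyadicDigit n y then (1 : ℝ) else 0) / 2 ^ (n + 1)

/-- the point θ_i, whose binary digits are
`(u_0, …, u_{N−2γ−1}, u_{N−2γ}, …, u_{N−γ−1}, u_{N−2γ}, …, u_{N−γ−1}, 0, 0, …)`,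
where `i = ∑_{l=0}^{N−γ−1} u_l 2^{N−γ−l−1}`. -/
noncomputable def paperTheta (N γ i : ℕ) : ℝ :=
  (∑ l ∈ Finset.range (N - γ),
      (if i.testBit (N - γ - l - 1) then (1 : ℝ) else 0) / 2 ^ (l + 1)) +
    ∑ l ∈ Finset.range γ,
      (if i.testBit (γ - l - 1) then (1 : ℝ) else 0) / 2 ^ (N - γ + l + 1)

/-- the Walsh polynomial
`P_N(t) = 2^{−(N−γ)} γ^{−1/2} ∑_{i=0}^{N−γ−1} D_{2^N}(t ∔ θ_i) ∑_{l=N−2γ}^{N−γ−1} w_{2^l}(t)`. -/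
noncomputable def walshPoly (N γ : ℕ) (t : ℝ) : ℝ :=
  (1 / (2 ^ (N - γ) * Real.sqrt γ)) *
    ∑ i ∈ Finset.range (N - γ),
      walshDirichlet (2 ^ N) (dyadicAdd t (paperTheta N γ i)) *
        ∑ l ∈ Finset.Ico (N - 2 * γ) (N - γ), walsh (2 ^ l) t

/-! ### Auxiliary lemmas -/

lemma dyadicDigit_lt_two (j : ℕ) (x : ℝ) : dyadicDigit j x < 2 :=
  Nat.mod_lt _ (by norm_num)

lemma walsh_sum_ext (n K : ℕ) (x : ℝ) (hK : n ≤ K) :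
    (∑ j ∈ Finset.range n, if n.testBit j then dyadicDigit j x else 0)
      = ∑ j ∈ Finset.range K, if n.testBit j then dyadicDigit j x else 0 := by
  apply Finset.sum_subset (Finset.range_subset_range.2 hK)
  intro j _ hj
  simp only [Finset.mem_range, not_lt] at hj
  have : n.testBit j = false :=
    Nat.testBit_lt_two_pow (lt_of_le_of_lt hj (Nat.lt_two_pow_self (n := j)))
  simp [this]

lemma walsh_eq_prod (M n : ℕ) (hn : n < 2 ^ M) (x : ℝ) :
    walsh n x = ∏ j ∈ Finset.range M,
      (if n.testBit j then (-1 : ℝ) ^ (dyadicDigit j x) else 1) := by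
  unfold walsh
  rw [walsh_sum_ext n (max n M) x (le_max_left _ _)]
  rw [← Finset.prod_pow_eq_pow_sum]
  rw [← Finset.prod_subset (Finset.range_subset_range.2 (le_max_right n M) :
        Finset.range M ⊆ Finset.range (max n M))]
  · apply Finset.prod_congr rfl
    intro j _
    by_cases h : n.testBit j <;> simp [h]
  · intro j _ hj
    simp only [Finset.mem_range, not_lt] at hj
    have : n.testBit j = false := Nat.testBit_lt_two_pow (lt_of_lt_of_le hn
      (Nat.pow_le_pow_right (by norm_num) hj))
    simp [this]

lemma walshDirichlet_two_pow (M : ℕ) (x : ℝ) :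
    walshDirichlet (2 ^ M) x
      = ∏ j ∈ Finset.range M, (1 + (-1 : ℝ) ^ (dyadicDigit j x)) := by
  induction M with
  | zero => simp [walshDirichlet, walsh]
  | succ M ih =>
      have hsplit : walshDirichlet (2 ^ (M + 1)) x
          = walshDirichlet (2 ^ M) x + ∑ k ∈ Finset.range (2 ^ M), walsh (2 ^ M + k) x := by
        unfold walshDirichlet
        rw [pow_succ, mul_two, Finset.sum_range_add]
      have hw : ∀ k ∈ Finset.range (2 ^ M),
          walsh (2 ^ M + k) x = (-1 : ℝ) ^ (dyadicDigit M x) * walsh k x := by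
        intro k hk
        rw [Finset.mem_range] at hk
        have h1 : 2 ^ M + k < 2 ^ (M + 1) := by
          rw [pow_succ, mul_two]; omega
        rw [walsh_eq_prod (M + 1) _ h1 x, walsh_eq_prod M k hk x,
          Finset.prod_range_succ]
        have hM : (2 ^ M + k).testBit M = true := by
          rw [Nat.testBit_two_pow_add_eq, Nat.testBit_lt_two_pow hk]; rfl
        rw [hM, if_pos rfl, mul_comm]
        congr 1
        apply Finset.prod_congr rfl
        intro j hj
        rw [Finset.mem_range] at hj
        rw [Nat.testBit_two_pow_add_gt hj]
      rw [hsplit, Finset.sum_congr rfl hw, ← Finset.mul_sum,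
        show (∑ k ∈ Finset.range (2 ^ M), walsh k x) = walshDirichlet (2 ^ M) x from rfl,
        ih, Finset.prod_range_succ]
      ring

lemma factor_nonneg (d : ℕ) : 0 ≤ 1 + (-1 : ℝ) ^ d := by
  rcases Nat.even_or_odd d with h | h
  · rw [h.neg_one_pow]; norm_num
  · rw [h.neg_one_pow]; norm_num

lemma factor_le_two (d : ℕ) : 1 + (-1 : ℝ) ^ d ≤ 2 := by
  rcases Nat.even_or_odd d with h | h
  · rw [h.neg_one_pow]; norm_num
  · rw [h.neg_one_pow]; norm_num

lemma walshDirichlet_nonneg (M : ℕ) (x : ℝ) : 0 ≤ walshDirichlet (2 ^ M) x := by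
  rw [walshDirichlet_two_pow]
  exact Finset.prod_nonneg fun j _ => factor_nonneg _

lemma walshDirichlet_le (M : ℕ) (x : ℝ) : walshDirichlet (2 ^ M) x ≤ 2 ^ M := by
  rw [walshDirichlet_two_pow]
  calc ∏ j ∈ Finset.range M, (1 + (-1 : ℝ) ^ (dyadicDigit j x))
      ≤ ∏ _j ∈ Finset.range M, (2 : ℝ) :=
        Finset.prod_le_prod (fun j _ => factor_nonneg _) (fun j _ => factor_le_two _)
    _ = 2 ^ M := by simp

lemma digits_zero_of_walshDirichlet_ne (M : ℕ) (x : ℝ)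
    (h : walshDirichlet (2 ^ M) x ≠ 0) : ∀ j < M, dyadicDigit j x = 0 := by
  rw [walshDirichlet_two_pow] at h
  intro j hj
  have hfac : (1 + (-1 : ℝ) ^ (dyadicDigit j x)) ≠ 0 := by
    intro h0
    exact h (Finset.prod_eq_zero (Finset.mem_range.2 hj) h0)
  rcases Nat.even_or_odd (dyadicDigit j x) with he | ho
  · have := dyadicDigit_lt_two j x
    rw [Nat.even_iff] at he
    omega
  · rw [ho.neg_one_pow] at hfac; norm_num at hfac

lemma finite_geom (m : ℕ) : ∑ k ∈ Finset.range m, (1 : ℝ) / 2 ^ (k + 1) = 1 - 1 / 2 ^ m := by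
  induction m with
  | zero => simp
  | succ m ih => rw [Finset.sum_range_succ, ih, pow_succ]; field_simp; ring

lemma dyadicDigit_finsum (M : ℕ) (c : ℕ → ℕ) (hc : ∀ l, c l ≤ 1) (n : ℕ) :
    dyadicDigit n (∑ l ∈ Finset.range M, (c l : ℝ) / 2 ^ (l + 1)) =
      if n < M then c n else 0 := by
  set K := min (n + 1) M with hK
  have hKM : K ≤ M := min_le_right _ _
  set A : ℕ := ∑ l ∈ Finset.range K, c l * 2 ^ (n - l) with hA
  set r : ℝ := ∑ l ∈ Finset.Ico K M, (c l : ℝ) / 2 ^ (l - n) with hr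
  have hsplit : (∑ l ∈ Finset.range M, (c l : ℝ) / 2 ^ (l + 1)) * 2 ^ (n + 1)
      = (A : ℝ) + r := by
    rw [Finset.sum_mul]
    rw [Finset.range_eq_Ico, ← Finset.sum_Ico_consecutive _ (Nat.zero_le K) hKM]
    congr 1
    · rw [← Finset.range_eq_Ico, hA, Nat.cast_sum]
      apply Finset.sum_congr rfl
      intro l hl
      rw [Finset.mem_range] at hl
      have hpow : (2 : ℝ) ^ (n + 1) = 2 ^ (l + 1) * 2 ^ (n - l) := by
        rw [← pow_add]; congr 1; omega
      push_cast
      rw [hpow]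
      have : (2:ℝ) ^ (l+1) ≠ 0 := by positivity
      field_simp
    · apply Finset.sum_congr rfl
      intro l hl
      rw [Finset.mem_Ico] at hl
      have hpow : (2 : ℝ) ^ (l + 1) = 2 ^ (n + 1) * 2 ^ (l - n) := by
        rw [← pow_add]; congr 1; omega
      rw [div_mul_eq_mul_div, div_eq_div_iff (by positivity) (by positivity), hpow]
      ring
  have hr0 : 0 ≤ r := Finset.sum_nonneg fun l _ => by positivity
  have hr1 : r < 1 := by
    by_cases hKM' : K = M
    · rw [hr, hKM', Finset.Ico_self, Finset.sum_empty]; norm_num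
    · have hKn' : K = n + 1 := by omega
      have h1 : r ≤ ∑ l ∈ Finset.Ico K M, (1 : ℝ) / 2 ^ (l - n) := by
        apply Finset.sum_le_sum
        intro l _
        gcongr
        exact_mod_cast hc l
      have h2 : ∑ l ∈ Finset.Ico K M, (1 : ℝ) / 2 ^ (l - n)
          = ∑ k ∈ Finset.range (M - (n + 1)), (1 : ℝ) / 2 ^ (k + 1) := by
        rw [hKn', Finset.sum_Ico_eq_sum_range]
        apply Finset.sum_congr rfl
        intro k _
        have : n + 1 + k - n = k + 1 := by omega
        rw [this]
      rw [h2, finite_geom] at h1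
      have : (0:ℝ) < 1 / 2 ^ (M - (n+1)) := by positivity
      linarith
  have hfloor : ⌊(∑ l ∈ Finset.range M, (c l : ℝ) / 2 ^ (l + 1)) * 2 ^ (n + 1)⌋ = (A : ℤ) := by
    rw [hsplit]
    rw [show ((A:ℕ):ℝ) = ((A:ℤ):ℝ) by push_cast; ring, Int.floor_intCast_add]
    have : ⌊r⌋ = 0 := Int.floor_eq_zero_iff.2 ⟨hr0, hr1⟩
    omega
  unfold dyadicDigit
  rw [hfloor, Int.toNat_natCast]
  by_cases hnM : n < M
  · have hKn' : K = n + 1 := by omega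
    rw [if_pos hnM]
    have hAs : A = (∑ l ∈ Finset.range n, c l * 2 ^ (n - l)) + c n := by
      rw [hA, hKn', Finset.sum_range_succ, Nat.sub_self, pow_zero, mul_one]
    have heven : ∑ l ∈ Finset.range n, c l * 2 ^ (n - l)
        = 2 * ∑ l ∈ Finset.range n, c l * 2 ^ (n - l - 1) := by
      rw [Finset.mul_sum]
      apply Finset.sum_congr rfl
      intro l hl
      rw [Finset.mem_range] at hl
      have : 2 ^ (n - l) = 2 * 2 ^ (n - l - 1) := by
        rw [← pow_succ']; congr 1; omega
      rw [this]; ring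
    have hcn := hc n
    omega
  · rw [if_neg hnM]
    have hKn' : K = M := by omega
    have heven : A = 2 * ∑ l ∈ Finset.range M, c l * 2 ^ (n - l - 1) := by
      rw [hA, hKn', Finset.mul_sum]
      apply Finset.sum_congr rfl
      intro l hl
      rw [Finset.mem_range] at hl
      have : 2 ^ (n - l) = 2 * 2 ^ (n - l - 1) := by
        rw [← pow_succ']; congr 1; omega
      rw [this]; ring
    omega

lemma fract_step {x : ℝ} (hx0 : 0 ≤ x) (n : ℕ) (hd : dyadicDigit (n + 1) x ≠ 0) :
    Int.fract (x * 2 ^ (n + 2)) = 2 * Int.fract (x * 2 ^ (n + 1)) - 1 := by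
  set y := x * 2 ^ (n + 1) with hy
  have hy0 : 0 ≤ y := by positivity
  have h2y : x * 2 ^ (n + 2) = 2 * y := by rw [hy]; ring
  have hfl : ⌊2 * y⌋ = 2 * ⌊y⌋ + ⌊2 * Int.fract y⌋ := by
    conv_lhs => rw [show (2:ℝ) * y = ((2 * ⌊y⌋ : ℤ) : ℝ) + 2 * Int.fract y by
      push_cast [Int.fract]; ring]
    rw [Int.floor_intCast_add]
  have he : ⌊2 * Int.fract y⌋ = 0 ∨ ⌊2 * Int.fract y⌋ = 1 := by
    have h1 : (0:ℝ) ≤ 2 * Int.fract y := by have := Int.fract_nonneg y; linarith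
    have h2 : 2 * Int.fract y < ((2 : ℤ) : ℝ) := by
      push_cast
      have := Int.fract_lt_one y; linarith
    have hl := Int.floor_nonneg.2 h1
    have hu := Int.floor_lt.2 h2
    omega
  have hfy0 : (0:ℤ) ≤ ⌊y⌋ := Int.floor_nonneg.2 hy0
  have hd' : dyadicDigit (n + 1) x = ⌊2 * y⌋.toNat % 2 := by
    unfold dyadicDigit
    rw [h2y]
  have he1 : ⌊2 * Int.fract y⌋ = 1 := by
    rw [hd'] at hd
    omega
  rw [h2y, Int.fract, hfl, he1]
  have hyf : y = ⌊y⌋ + Int.fract y := (Int.floor_add_fract y).symm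
  nth_rewrite 1 [hyf]
  rw [Int.fract]
  push_cast
  ring

lemma exists_digit_zero {x : ℝ} (hx0 : 0 ≤ x) (N : ℕ) :
    ∃ n, N ≤ n ∧ dyadicDigit n x = 0 := by
  by_contra h
  push_neg at h
  have hstep : ∀ k : ℕ, 1 - Int.fract (x * 2 ^ (N + k + 1))
      ≥ 2 ^ k * (1 - Int.fract (x * 2 ^ (N + 1))) := by
    intro k
    induction k with
    | zero => simp
    | succ k ih =>
        have hd : dyadicDigit (N + k + 1) x ≠ 0 := h (N + k + 1) (by omega)
        have hfs := fract_step hx0 (N + k) hd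
        have hexp : x * 2 ^ (N + (k + 1) + 1) = x * 2 ^ (N + k + 2) := by congr 1
        rw [hexp, hfs, show ((2:ℝ) ^ (k+1)) = 2 * 2 ^ k from by ring]
        nlinarith [ih]
  set ε := 1 - Int.fract (x * 2 ^ (N + 1)) with hε
  have hεpos : 0 < ε := by
    have := Int.fract_lt_one (x * 2 ^ (N + 1)); simp [hε]; linarith
  obtain ⟨k, hk⟩ := pow_unbounded_of_one_lt (1 / ε) (one_lt_two (α := ℝ))
  have h1 : 2 ^ k * ε ≤ 1 := by
    have := hstep k
    have := Int.fract_nonneg (x * 2 ^ (N + k + 1))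
    linarith
  rw [div_lt_iff₀ hεpos] at hk
  nlinarith

lemma small_of_digits_zero {s : ℝ} (h0 : 0 ≤ s) (h1 : s < 1) (N : ℕ) (hN : 1 ≤ N)
    (hd : ∀ j < N, dyadicDigit j s = 0) : s < 1 / 2 ^ N := by
  by_contra hge
  push_neg at hge
  have hex : ∃ j : ℕ, 1 / 2 ^ (j + 1) ≤ s := by
    refine ⟨N - 1, ?_⟩
    have : N - 1 + 1 = N := by omega
    rw [this]
    exact hge
  classical
  set j0 := Nat.find hex with hj0
  have hsp : 1 / 2 ^ (j0 + 1) ≤ s := Nat.find_spec hex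
  have hj0N : j0 < N := by
    have : j0 ≤ N - 1 := Nat.find_min' hex (by
      have : N - 1 + 1 = N := by omega
      rw [this]; exact hge)
    omega
  have hup : s * 2 ^ (j0 + 1) < 2 := by
    rcases Nat.eq_zero_or_pos j0 with h | h
    · rw [h]; norm_num; linarith
    · have hm : j0 - 1 < j0 := by omega
      have hmin := Nat.find_min hex hm
      push_neg at hmin
      have hj1 : j0 - 1 + 1 = j0 := by omega
      rw [hj1] at hmin
      have h2pos : (0:ℝ) < 2 ^ j0 := by positivity
      have hlt : s * 2 ^ j0 < 1 := (lt_div_iff₀ h2pos).1 hmin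
      rw [pow_succ]
      nlinarith
  have hlow : (1:ℝ) ≤ s * 2 ^ (j0 + 1) := by
    have h2pos : (0:ℝ) < 2 ^ (j0 + 1) := by positivity
    rw [div_le_iff₀ h2pos] at hsp
    linarith
  have hfl : ⌊s * 2 ^ (j0 + 1)⌋ = 1 := by
    apply Int.floor_eq_iff.2
    constructor
    · push_cast; linarith
    · push_cast; linarith
  have : dyadicDigit j0 s = 1 := by
    unfold dyadicDigit
    rw [hfl]
    rfl
  have := hd j0 hj0N
  omega

lemma summable_geom' : Summable (fun n : ℕ => (1:ℝ) / 2 ^ (n + 1)) := by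
  have hform : (fun n : ℕ => (1:ℝ) / 2 ^ (n + 1)) = fun n : ℕ => (1:ℝ) / 2 / 2 ^ n := by
    funext n; rw [pow_succ]; ring
  rw [hform]
  exact summable_geometric_two' 1

lemma tsum_geom' : ∑' n : ℕ, (1:ℝ) / 2 ^ (n + 1) = 1 := by
  have hform : (fun n : ℕ => (1:ℝ) / 2 ^ (n + 1)) = fun n : ℕ => (1:ℝ) / 2 / 2 ^ n := by
    funext n; rw [pow_succ]; ring
  rw [hform]
  exact tsum_geometric_two' 1

/-- The key disjointness property. -/
lemma key_digits {t θ : ℝ} (ht0 : 0 ≤ t) (N : ℕ) (hN : 1 ≤ N)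
    (hθ : ∀ n, N ≤ n → dyadicDigit n θ = 0)
    (hD : walshDirichlet (2 ^ N) (dyadicAdd t θ) ≠ 0) :
    ∀ n < N, dyadicDigit n t = dyadicDigit n θ := by
  classical
  set b : ℕ → ℝ :=
    fun n => (if dyadicDigit n t ≠ dyadicDigit n θ then (1:ℝ) else 0) / 2 ^ (n + 1) with hb
  have hb0 : ∀ n, 0 ≤ b n := by
    intro n; rw [hb]; positivity
  have hbg : ∀ n, b n ≤ 1 / 2 ^ (n + 1) := by
    intro n
    rw [hb]
    simp only
    gcongr
    split <;> norm_num
  have hb_sum : Summable b := Summable.of_nonneg_of_le hb0 hbg summable_geom'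
  have hs : dyadicAdd t θ = ∑' n, b n := rfl
  have hs0 : 0 ≤ dyadicAdd t θ := by
    rw [hs]; exact tsum_nonneg hb0
  obtain ⟨n0, hn0N, hn0⟩ := exists_digit_zero ht0 N
  have hbn0 : b n0 = 0 := by
    rw [hb]
    have : dyadicDigit n0 t = dyadicDigit n0 θ := by rw [hn0, hθ n0 hn0N]
    simp [this]
  have hs1 : dyadicAdd t θ < 1 := by
    have hle : dyadicAdd t θ ≤ ∑' n : ℕ, (if n = n0 then 0 else (1:ℝ) / 2 ^ (n + 1)) := by
      rw [hs]
      apply Summable.tsum_le_tsum _ hb_sum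
      · apply Summable.of_nonneg_of_le _ _ summable_geom'
        · intro n; split <;> positivity
        · intro n; split <;> [positivity; exact le_refl _]
      · intro n
        by_cases hn : n = n0
        · rw [if_pos hn, hn, hbn0]
        · rw [if_neg hn]; exact hbg n
    have heq : ∑' n : ℕ, (if n = n0 then 0 else (1:ℝ) / 2 ^ (n + 1))
        = 1 - 1 / 2 ^ (n0 + 1) := by
      have := Summable.tsum_eq_add_tsum_ite summable_geom' n0
      rw [tsum_geom'] at this
      linarith [this]
    rw [heq] at hle
    have : (0:ℝ) < 1 / 2 ^ (n0 + 1) := by positivity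
    linarith
  have hdig : ∀ j < N, dyadicDigit j (dyadicAdd t θ) = 0 :=
    digits_zero_of_walshDirichlet_ne N _ hD
  have hsmall := small_of_digits_zero hs0 hs1 N hN hdig
  intro n hn
  by_contra hne
  have hbn : b n = 1 / 2 ^ (n + 1) := by
    rw [hb]; simp only [if_pos hne]
  have hle : b n ≤ dyadicAdd t θ := by
    rw [hs]
    exact Summable.le_tsum hb_sum n (fun j _ => hb0 j)
  have hmono : (1:ℝ) / 2 ^ N ≤ 1 / 2 ^ (n + 1) := by
    gcongr
    · norm_num
    · omega
  rw [hbn] at hle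
  linarith

/-- digits of θ_i. -/
def thetaBit (N γ i n : ℕ) : ℕ :=
  if n < N - γ then (if i.testBit (N - γ - n - 1) then 1 else 0)
  else (if i.testBit (N - n - 1) then 1 else 0)

lemma thetaBit_le (N γ i n : ℕ) : thetaBit N γ i n ≤ 1 := by
  unfold thetaBit
  split <;> split <;> norm_num

lemma paperTheta_eq (N γ i : ℕ) (hγ : γ ≤ N) :
    paperTheta N γ i = ∑ n ∈ Finset.range N, (thetaBit N γ i n : ℝ) / 2 ^ (n + 1) := by
  have hsplit : ∑ n ∈ Finset.range N, (thetaBit N γ i n : ℝ) / 2 ^ (n + 1)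
      = (∑ n ∈ Finset.range (N - γ), (thetaBit N γ i n : ℝ) / 2 ^ (n + 1))
        + ∑ n ∈ Finset.Ico (N - γ) N, (thetaBit N γ i n : ℝ) / 2 ^ (n + 1) := by
    rw [Finset.range_eq_Ico,
      ← Finset.sum_Ico_consecutive _ (Nat.zero_le (N - γ)) (Nat.sub_le N γ),
      ← Finset.range_eq_Ico]
  rw [hsplit]
  unfold paperTheta
  congr 1
  · apply Finset.sum_congr rfl
    intro l hl
    rw [Finset.mem_range] at hl
    unfold thetaBit
    rw [if_pos hl]
    split <;> norm_num
  · rw [Finset.sum_Ico_eq_sum_range]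
    have hγ' : N - (N - γ) = γ := by omega
    rw [hγ']
    apply Finset.sum_congr rfl
    intro l hl
    rw [Finset.mem_range] at hl
    unfold thetaBit
    rw [if_neg (by omega : ¬ (N - γ + l < N - γ))]
    have h1 : N - (N - γ + l) - 1 = γ - l - 1 := by omega
    rw [h1]
    split <;> norm_num

lemma dyadicDigit_paperTheta (N γ i : ℕ) (hγ : γ ≤ N) (n : ℕ) :
    dyadicDigit n (paperTheta N γ i) = if n < N then thetaBit N γ i n else 0 := by
  rw [paperTheta_eq N γ i hγ]
  exact dyadicDigit_finsum N _ (thetaBit_le N γ i) n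

lemma theta_inj {N γ : ℕ} (hγ : γ ≤ N) {i1 i2 : ℕ}
    (h1 : i1 < 2 ^ (N - γ)) (h2 : i2 < 2 ^ (N - γ))
    (h : ∀ n < N - γ, dyadicDigit n (paperTheta N γ i1) = dyadicDigit n (paperTheta N γ i2)) :
    i1 = i2 := by
  apply Nat.eq_of_testBit_eq
  intro p
  by_cases hp : p < N - γ
  · have hn : N - γ - p - 1 < N - γ := by omega
    have := h (N - γ - p - 1) hn
    rw [dyadicDigit_paperTheta N γ i1 hγ, dyadicDigit_paperTheta N γ i2 hγ,
      if_pos (by omega : N - γ - p - 1 < N), if_pos (by omega : N - γ - p - 1 < N)] at this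
    unfold thetaBit at this
    rw [if_pos hn, if_pos hn] at this
    have hpp : N - γ - (N - γ - p - 1) - 1 = p := by omega
    rw [hpp] at this
    cases hb1 : i1.testBit p <;> cases hb2 : i2.testBit p <;>
      simp [hb1, hb2] at this <;> rfl
  · rw [Nat.testBit_lt_two_pow (lt_of_lt_of_le h1 (Nat.pow_le_pow_right (by norm_num) (by omega))),
      Nat.testBit_lt_two_pow (lt_of_lt_of_le h2 (Nat.pow_le_pow_right (by norm_num) (by omega)))]

lemma abs_walsh_le (n : ℕ) (x : ℝ) : |walsh n x| ≤ 1 := by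
  unfold walsh
  rw [abs_pow, abs_neg, abs_one, one_pow]

theorem stmt_18 :
    ∃ C : ℝ, 0 < C ∧ ∀ N γ : ℕ, 1 ≤ γ → 2 * γ < N →
      ∀ t ∈ Set.Ico (0 : ℝ) 1,
        |walshPoly N γ t| ≤ C * 2 ^ γ * Real.sqrt γ := by
  classical
  refine ⟨1, one_pos, ?_⟩
  intro N γ hγ hN t ht
  obtain ⟨ht0, ht1⟩ := ht
  have hγN : γ ≤ N := by omega
  have hN1 : 1 ≤ N := by omega
  set D : ℕ → ℝ := fun i => walshDirichlet (2 ^ N) (dyadicAdd t (paperTheta N γ i)) with hDdef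
  set W : ℝ := ∑ l ∈ Finset.Ico (N - 2 * γ) (N - γ), walsh (2 ^ l) t with hWdef
  have hWbound : |W| ≤ (γ : ℝ) := by
    rw [hWdef]
    calc |∑ l ∈ Finset.Ico (N - 2 * γ) (N - γ), walsh (2 ^ l) t|
        ≤ ∑ l ∈ Finset.Ico (N - 2 * γ) (N - γ), |walsh (2 ^ l) t| :=
          Finset.abs_sum_le_sum_abs _ _
      _ ≤ ∑ _l ∈ Finset.Ico (N - 2 * γ) (N - γ), (1:ℝ) :=
          Finset.sum_le_sum fun l _ => abs_walsh_le _ _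
      _ = (γ : ℝ) := by
          rw [Finset.sum_const, Nat.card_Ico]
          have : N - γ - (N - 2 * γ) = γ := by omega
          rw [this]; simp
  have hθdig : ∀ i, ∀ n, N ≤ n → dyadicDigit n (paperTheta N γ i) = 0 := by
    intro i n hn
    rw [dyadicDigit_paperTheta N γ i hγN, if_neg (by omega)]
  have huniq : ∀ i1 ∈ Finset.range (N - γ), ∀ i2 ∈ Finset.range (N - γ),
      D i1 ≠ 0 → D i2 ≠ 0 → i1 = i2 := by
    intro i1 hi1 i2 hi2 hd1 hd2
    rw [Finset.mem_range] at hi1 hi2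
    have hk1 := key_digits ht0 N hN1 (hθdig i1) hd1
    have hk2 := key_digits ht0 N hN1 (hθdig i2) hd2
    apply theta_inj hγN
      (lt_of_lt_of_le hi1 (Nat.lt_two_pow_self (n := N - γ)).le)
      (lt_of_lt_of_le hi2 (Nat.lt_two_pow_self (n := N - γ)).le)
    intro n hn
    rw [← hk1 n (by omega), ← hk2 n (by omega)]
  have hD0 : ∀ i, 0 ≤ D i := fun i => walshDirichlet_nonneg N _
  have hDle : ∀ i, D i ≤ 2 ^ N := fun i => walshDirichlet_le N _
  have hsum0 : 0 ≤ ∑ i ∈ Finset.range (N - γ), D i :=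
    Finset.sum_nonneg fun i _ => hD0 i
  have hsum : ∑ i ∈ Finset.range (N - γ), D i ≤ 2 ^ N := by
    by_cases hex : ∃ i ∈ Finset.range (N - γ), D i ≠ 0
    · obtain ⟨i0, hi0, hne0⟩ := hex
      rw [Finset.sum_eq_single_of_mem i0 hi0 (fun j hj hji => by
        by_contra hj0
        exact hji (huniq j hj i0 hi0 hj0 hne0))]
      exact hDle i0
    · push_neg at hex
      rw [Finset.sum_eq_zero hex]
      positivity
  have hsqpos : 0 < Real.sqrt γ := Real.sqrt_pos.2 (by exact_mod_cast hγ)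
  have hcoeff : (0:ℝ) ≤ 1 / (2 ^ (N - γ) * Real.sqrt γ) := by positivity
  have hPdef : walshPoly N γ t
      = (1 / (2 ^ (N - γ) * Real.sqrt γ)) * ((∑ i ∈ Finset.range (N - γ), D i) * W) := by
    unfold walshPoly
    rw [Finset.sum_mul]
  have habs : |walshPoly N γ t|
      = (1 / (2 ^ (N - γ) * Real.sqrt γ)) * ((∑ i ∈ Finset.range (N - γ), D i) * |W|) := by
    rw [hPdef, abs_mul, abs_mul, abs_of_nonneg hcoeff, abs_of_nonneg hsum0]
  have hbound : |walshPoly N γ t|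
      ≤ (1 / (2 ^ (N - γ) * Real.sqrt γ)) * (2 ^ N * (γ : ℝ)) := by
    rw [habs]
    have h := mul_le_mul hsum hWbound (abs_nonneg W) (by positivity : (0:ℝ) ≤ 2 ^ N)
    exact mul_le_mul_of_nonneg_left h hcoeff
  have heq : (1 / ((2:ℝ) ^ (N - γ) * Real.sqrt γ)) * (2 ^ N * (γ : ℝ))
      = 2 ^ γ * Real.sqrt γ := by
    have h2 : (2:ℝ) ^ N = 2 ^ (N - γ) * 2 ^ γ := by
      rw [← pow_add]; congr 1; omega
    have hsq : Real.sqrt γ * Real.sqrt γ = (γ : ℝ) :=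
      Real.mul_self_sqrt (by positivity)
    rw [h2]
    field_simp
    nlinarith [hsq]
  rw [heq] at hbound
  linarith
end
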